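/- Let N be a unital C*-algebra and let r be a positive integer such that the set Lg_r(N) = {(x₁, …, x_r) ∈ Nʳ : there exist y₁, …, y_r ∈ N with y₁x₁ + ⋯ + y_r x_r = 1} is dense in Nʳ. Let A be a separable C*-subalgebra of N containing the unit of N. Then there exists a separable C*-subalgebra B of N with A ⊆ B ⊆ N and 1 ∈ B such that the set {(x₁, …, x_r) ∈ Bʳ : there exist y₁, …, y_r ∈ B with y₁x₁ + ⋯ + y_r x_r = 1} is dense in Bʳ. -/

import Mathlib

/-!
A closing-off argument. Enlarge a countable dense subset of `A` to a countable set `U ⊆ N`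
containing, for every finite `F ⊆ U`, a countable dense subset of the *-algebra generated by `F`,
and, for every `r`-tuple `t` from `U`, a sequence in `Lg_r(N)` converging to `t` together with
witnesses. Then `U` is dense in the closure `B` of the *-algebra it generates, and every `r`-tuple
from `U` is a limit of tuples of `Lg_r(N)` whose entries and witnesses lie in `B`, that is, of
tuples of `Lg_r(B)`.
-/

/-- `Lg r D` is the set of `r`-tuples of elements of a unital ring `D` which generate
`D` as a left ideal: the tuples `(x₁, …, x_r)` for which there are `y₁, …, y_r` with
`y₁ x₁ + ⋯ + y_r x_r = 1`.  Density of this set in `Dʳ` is Rieffel's characterization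
of topological stable rank at most `r`. -/
def Lg (r : ℕ) (D : Type*) [Ring D] : Set (Fin r → D) :=
  {x | ∃ y : Fin r → D, ∑ i, y i * x i = 1}

open Filter Topology TopologicalSpace Set

theorem Set.Countable.exists_countable_superset_forall_finset_subset {α : Type*} {s₀ : Set α}
    (hs₀ : s₀.Countable) (g : Finset α → Set α) (hg : ∀ F, (g F).Countable) :
    ∃ U, s₀ ⊆ U ∧ U.Countable ∧ ∀ F : Finset α, ↑F ⊆ U → g F ⊆ U := by
  let step : Set α → Set α := fun S => S ∪ ⋃ F ∈ {F : Finset α | ↑F ⊆ S}, g F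
  let S : ℕ → Set α := fun n => step^[n] s₀
  have hS_succ (n : ℕ) : S (n + 1) = step (S n) := Function.iterate_succ_apply' step n s₀
  have hS_mono : Monotone S :=
    monotone_nat_of_le_succ fun n => (hS_succ n).symm ▸ subset_union_left
  have hS_countable (n : ℕ) : (S n).Countable := by
    induction n with
    | zero => exact hs₀
    | succ n ih =>
      rw [hS_succ]
      have hF : {F : Finset α | ↑F ⊆ S n}.Countable :=
        ((countable_ofPred_finite_subset ih).preimage Finset.coe_injective).mono
          fun F hF => by exact ⟨F.finite_toSet, hF⟩
      exact ih.union (hF.biUnion fun F _ => hg F)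
  refine ⟨⋃ n, S n, subset_iUnion S 0, countable_iUnion hS_countable, fun F hF => ?_⟩
  obtain ⟨n, hn⟩ := hS_mono.directed_le.exists_mem_subset_of_finset_subset_biUnion hF
  have hgF : g F ⊆ S (n + 1) := by
    rw [hS_succ]
    exact subset_union_of_subset_right (subset_biUnion_of_mem (u := g) hn) _
  exact hgF.trans (subset_iUnion S (n + 1))

theorem Set.Countable.submonoidClosure {M : Type*} [Monoid M] {s : Set M} (hs : s.Countable) :
    (Submonoid.closure s : Set M).Countable := by
  have := hs.to_subtype
  rw [Submonoid.closure_eq_mrange, MonoidHom.coe_mrange]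
  exact countable_range _

namespace StarAlgebra

variable {R A : Type*} [CommSemiring R] [StarRing R] [Semiring A] [StarRing A] [Algebra R A]
  [StarModule R A]

theorem exists_finset_subset_mem_adjoin {s : Set A} {x : A} (hx : x ∈ adjoin R s) :
    ∃ F : Finset A, ↑F ⊆ s ∧ x ∈ adjoin R (F : Set A) := by
  classical
  let ι := {F : Finset A // ↑F ⊆ s}
  have hdir : Directed (· ≤ ·) fun F : ι => adjoin R (F.1 : Set A) := fun F G =>
    ⟨⟨F.1 ∪ G.1, by simpa using And.intro F.2 G.2⟩,
      adjoin_mono (by simp), adjoin_mono (by simp)⟩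
  have : Nonempty ι := ⟨⟨∅, by simp⟩⟩
  have hle : adjoin R s ≤ ⨆ F : ι, adjoin R (F.1 : Set A) := adjoin_le fun a ha =>
    le_iSup (fun F : ι => adjoin R (F.1 : Set A)) ⟨{a}, by simpa using ha⟩
      (subset_adjoin R _ (by simp))
  have hxF := hle hx
  rw [← SetLike.mem_coe, StarSubalgebra.coe_iSup_of_directed hdir, mem_iUnion] at hxF
  obtain ⟨F, hF⟩ := hxF
  exact ⟨F.1, F.2, hF⟩

theorem _root_.Set.Countable.isSeparable_starAlgebraAdjoin [TopologicalSpace R]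
    [SeparableSpace R] [TopologicalSpace A] [ContinuousAdd A] [ContinuousSMul R A] {s : Set A}
    (hs : s.Countable) : IsSeparable (adjoin R s : Set A) := by
  have hstar : (star s).Countable := hs.preimage star_injective
  change IsSeparable (Subalgebra.toSubmodule (adjoin R s).toSubalgebra : Set A)
  rw [adjoin_eq_span]
  exact (hs.union hstar).submonoidClosure.isSeparable.span

end StarAlgebra

def lgWithin {R : Type*} [Ring R] (r : ℕ) (U : Set R) : Set (Fin r → R) :=
  {x | (∀ i, x i ∈ U) ∧ ∃ y : Fin r → R, (∀ i, y i ∈ U) ∧ ∑ i, y i * x i = 1}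

theorem lgWithin_subset_image_lg {R S : Type*} [Ring R] [SetLike S R] [SubringClass S R]
    {r : ℕ} {B : S} {U : Set R} (hUB : U ⊆ B) :
    lgWithin r U ⊆ Pi.map (fun _ (b : B) => (b : R)) '' Lg r B := by
  rintro x ⟨hx, y, hy, hxy⟩
  refine ⟨fun i => ⟨x i, hUB (hx i)⟩, ⟨fun i => ⟨y i, hUB (hy i)⟩, Subtype.ext ?_⟩, rfl⟩
  simpa using hxy

theorem dense_lg_of_subset_closure {R S : Type*} [Ring R] [TopologicalSpace R] [SetLike S R]
    [SubringClass S R] {r : ℕ} {B : S} {U : Set R} (hUB : U ⊆ B) (hBU : (B : Set R) ⊆ closure U)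
    (hU : univ.pi (fun _ => U) ⊆ closure (lgWithin r U)) : Dense (Lg r B) := by
  have hι : IsInducing (Pi.map fun (_ : Fin r) (b : B) => (b : R)) :=
    .piMap fun _ => .subtypeVal
  rw [hι.dense_iff]
  intro t
  have ht : Pi.map (fun _ (b : B) => (b : R)) t ∈ closure (univ.pi fun _ => U) := by
    rw [closure_pi_set]
    exact fun i _ => hBU (t i).2
  exact closure_mono (lgWithin_subset_image_lg hUB) (closure_minimal hU isClosed_closure ht)

section Construction

variable {R A : Type*} [CommSemiring R] [StarRing R] [TopologicalSpace R] [SeparableSpace R]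
  [Ring A] [StarRing A] [Algebra R A] [StarModule R A] [TopologicalSpace A]
  [FirstCountableTopology A] [ContinuousAdd A] [ContinuousSMul R A]

theorem exists_countable_superset_pi_subset_closure_lgWithin {r : ℕ} (hA : Dense (Lg r A))
    {s₀ : Set A} (hs₀ : s₀.Countable) :
    ∃ U, s₀ ⊆ U ∧ U.Countable ∧ (StarAlgebra.adjoin R U : Set A) ⊆ closure U ∧
      univ.pi (fun _ => U) ⊆ closure (lgWithin r U) := by
  choose x hxLg hxt using fun t => mem_closure_iff_seq_limit.mp (hA t)
  choose y hy using hxLg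
  choose D hDc hD using fun F : Finset A =>
    F.countable_toSet.isSeparable_starAlgebraAdjoin (R := R)
  let approximants (F : Finset A) : Set A :=
    ⋃ t ∈ univ.pi (fun _ => (F : Set A)), ⋃ k, range (x t k) ∪ range (y t k)
  have happrox (F : Finset A) : (approximants F).Countable :=
    (countable_univ_pi fun _ => F.countable_toSet).biUnion fun _ _ =>
      countable_iUnion fun _ => (countable_range _).union (countable_range _)
  obtain ⟨U, hs₀U, hUc, hU⟩ :=
    hs₀.exists_countable_superset_forall_finset_subset (fun F => D F ∪ approximants F)
      fun F => (hDc F).union (happrox F)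
  refine ⟨U, hs₀U, hUc, fun z hz => ?_, fun t ht => ?_⟩
  · obtain ⟨F, hFU, hzF⟩ := StarAlgebra.exists_finset_subset_mem_adjoin hz
    exact closure_mono (subset_union_left.trans (hU F hFU)) (hD F hzF)
  · classical
    let F := Finset.univ.image t
    have hFU : ↑F ⊆ U := by simpa [F, range_subset_iff] using ht
    have htF : t ∈ univ.pi fun _ => (F : Set A) := fun i _ => by simp [F]
    have hxyU (k : ℕ) : range (x t k) ∪ range (y t k) ⊆ U := fun a ha =>
      hU F hFU (Or.inr (mem_biUnion htF (mem_iUnion.2 ⟨k, ha⟩)))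
    refine mem_closure_of_tendsto (hxt t) (Eventually.of_forall fun k => ?_)
    exact ⟨fun i => hxyU k (Or.inl ⟨i, rfl⟩), y t k, fun i => hxyU k (Or.inr ⟨i, rfl⟩), hy t k⟩

end Construction

theorem exists_separable_intermediate_subalgebra_lg_dense_general
    (N : Type*) [CStarAlgebra N] (r : ℕ)
    (hN : Dense (Lg r N))
    (A : StarSubalgebra ℂ N)
    (hA_sep : TopologicalSpace.SeparableSpace A) :
    ∃ B : StarSubalgebra ℂ N, IsClosed (B : Set N) ∧
      TopologicalSpace.SeparableSpace B ∧ A ≤ B ∧ (1 : N) ∈ B ∧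
      Dense (Lg r B) := by
  obtain ⟨s₀, hs₀, hAs₀⟩ := IsSeparable.of_subtype (A : Set N)
  obtain ⟨U, hs₀U, hU, hUadj, hUlg⟩ :=
    exists_countable_superset_pi_subset_closure_lgWithin (R := ℂ) hN hs₀
  let B := (StarAlgebra.adjoin ℂ U).topologicalClosure
  have hUB : U ⊆ B := (StarAlgebra.subset_adjoin ℂ U).trans
    (StarSubalgebra.le_topologicalClosure _)
  refine ⟨B, StarSubalgebra.isClosed_topologicalClosure _, ?_, ?_, one_mem B, ?_⟩
  · exact hU.isSeparable_starAlgebraAdjoin.closure.separableSpace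
  · exact hAs₀.trans
      (closure_minimal (hs₀U.trans hUB) (StarSubalgebra.isClosed_topologicalClosure _))
  · exact dense_lg_of_subset_closure hUB (closure_minimal hUadj isClosed_closure) hUlg

/-- If `N` is a unital C*-algebra with `Lg_r(N)` dense in `Nʳ`, and `A ⊆ N` is a
separable C*-subalgebra containing the unit, then there is a separable C*-subalgebra
`B` with `A ⊆ B ⊆ N`, `1 ∈ B`, and `Lg_r(B)` dense in `Bʳ`. -/
theorem exists_separable_intermediate_subalgebra_lg_dense
    (N : Type*) [CStarAlgebra N] (r : ℕ) (hr : 0 < r)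
    (hN : Dense (Lg r N))
    (A : StarSubalgebra ℂ N) (hA_closed : IsClosed (A : Set N))
    (hA_sep : TopologicalSpace.SeparableSpace A) :
    ∃ B : StarSubalgebra ℂ N, IsClosed (B : Set N) ∧
      TopologicalSpace.SeparableSpace B ∧ A ≤ B ∧ (1 : N) ∈ B ∧
      Dense (Lg r B) :=
  exists_separable_intermediate_subalgebra_lg_dense_general N r hN A hA_sep
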